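/- arXiv:1412.0515 — 2 statements merged into one kernel-verified Lean document; each statement's English description precedes it below -/
import Mathlib

section
/- Let k be a nonnegative integer and k' a positive integer. If G is a finite simple graph of order n with minimum degree δ(G) ≥ k and maximum degree Δ, then γ_{(k,k',0)}(G) ≥ k'·n/(Δ + k' − k). -/
open Finset

/-- A set `S` of vertices is a `(k,k',k'')`-dominating set if every vertex in `S` has at
least `k` neighbors in `S`, and every vertex not in `S` has at least `k'` neighbors in `S`
and at least `k''` neighbors outside `S`. -/
def SimpleGraph.IsKkkDomSet {V : Type*} [Fintype V] [DecidableEq V] (G : SimpleGraph V)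
    [DecidableRel G.Adj] (k k' k'' : ℕ) (S : Finset V) : Prop :=
  (∀ v ∈ S, k ≤ (G.neighborFinset v ∩ S).card) ∧
  (∀ v ∉ S, k' ≤ (G.neighborFinset v ∩ S).card ∧ k'' ≤ (G.neighborFinset v \ S).card)

/-- The `(k,k',k'')`-domination number: the minimum cardinality of a
`(k,k',k'')`-dominating set. -/
noncomputable def SimpleGraph.kkkDomNum {V : Type*} [Fintype V] [DecidableEq V]
    (G : SimpleGraph V) [DecidableRel G.Adj] (k k' k'' : ℕ) : ℕ :=
  sInf {n | ∃ S : Finset V, G.IsKkkDomSet k k' k'' S ∧ S.card = n}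

/-!
Count the edges between a `(k,k',k'')`-dominating set `S` and its complement: each vertex
outside `S` sends at least `k'` of them into `S`, and each vertex of `S` has at least `k` of
its at most `Δ` neighbours inside `S`, so it receives at most `Δ - k`. Hence
`k' (n - |S|) ≤ |S| (Δ - k)`, i.e. `k' n ≤ |S| (Δ + k' - k)`.
-/

namespace SimpleGraph

variable {V : Type*} [Fintype V] [DecidableEq V] {G : SimpleGraph V} [DecidableRel G.Adj]

theorem isKkkDomSet_univ {k : ℕ} (hδ : ∀ v, k ≤ G.degree v) (k' k'' : ℕ) :
    G.IsKkkDomSet k k' k'' univ :=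
  ⟨fun v _ ↦ by simpa using hδ v, fun v hv ↦ absurd (mem_univ v) hv⟩

theorem IsKkkDomSet.exists_card_eq_kkkDomNum {k k' k'' : ℕ} {T : Finset V}
    (hT : G.IsKkkDomSet k k' k'' T) :
    ∃ S, G.IsKkkDomSet k k' k'' S ∧ S.card = G.kkkDomNum k k' k'' :=
  Nat.sInf_mem (s := {n | ∃ S : Finset V, G.IsKkkDomSet k k' k'' S ∧ S.card = n}) ⟨_, T, hT, rfl⟩

theorem card_neighborFinset_sdiff_le {k : ℕ} {S : Finset V} {v : V}
    (hv : k ≤ #(G.neighborFinset v ∩ S)) : #(G.neighborFinset v \ S) ≤ G.maxDegree - k := by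
  have hsplit := card_sdiff_add_card_inter (G.neighborFinset v) S
  have hdeg : #(G.neighborFinset v) ≤ G.maxDegree := G.degree_le_maxDegree v
  omega

theorem IsKkkDomSet.card_compl_mul_le {k k' k'' : ℕ} {S : Finset V}
    (hS : G.IsKkkDomSet k k' k'' S) : #Sᶜ * k' ≤ #S * (G.maxDegree - k) := by
  refine card_mul_le_card_mul G.Adj (fun v hv ↦ ?_) fun u hu ↦ ?_
  · have hN : S.bipartiteAbove G.Adj v = G.neighborFinset v ∩ S := by
      ext; simp [and_comm]
    exact hN ▸ (hS.2 v (mem_compl.1 hv)).1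
  · have hN : Sᶜ.bipartiteBelow G.Adj u = G.neighborFinset u \ S := by
      ext; simp [and_comm, G.adj_comm]
    exact hN ▸ card_neighborFinset_sdiff_le (hS.1 u hu)

theorem IsKkkDomSet.mul_card_le {k k' k'' : ℕ} {S : Finset V}
    (hS : G.IsKkkDomSet k k' k'' S) :
    k' * Fintype.card V ≤ #S * (G.maxDegree - k + k') := by
  have hcompl : #Sᶜ + #S = Fintype.card V := card_compl_add_card S
  have := hS.card_compl_mul_le
  rw [← hcompl]
  nlinarith

end SimpleGraph

theorem stmt_4_general {V : Type*} [Fintype V] [DecidableEq V] (G : SimpleGraph V)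
    [DecidableRel G.Adj] (k k' : ℕ)
    (hδ : ∀ v : V, k ≤ G.degree v) :
    (k' : ℝ) * Fintype.card V / ((G.maxDegree : ℝ) + k' - k) ≤ G.kkkDomNum k k' 0 := by
  rcases isEmpty_or_nonempty V with hV | hV
  · simp [Fintype.card_eq_zero]
  have hkΔ : k ≤ G.maxDegree := (hδ hV.some).trans (G.degree_le_maxDegree _)
  obtain ⟨S, hS, hcard⟩ := (SimpleGraph.isKkkDomSet_univ hδ k' 0).exists_card_eq_kkkDomNum
  have hbound : (k' : ℝ) * Fintype.card V ≤ #S * ((G.maxDegree : ℝ) + k' - k) := by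
    have h : ((k' * Fintype.card V : ℕ) : ℝ) ≤ (#S * (G.maxDegree - k + k') : ℕ) :=
      Nat.cast_le.2 hS.mul_card_le
    push_cast [Nat.cast_sub hkΔ] at h
    linarith
  rw [← hcard]
  refine div_le_of_le_mul₀ ?_ (Nat.cast_nonneg _) hbound
  have : (k : ℝ) ≤ G.maxDegree := by exact_mod_cast hkΔ
  linarith [Nat.cast_nonneg (α := ℝ) k']

/-- If δ(G) ≥ k and k' ≥ 1, then γ_{(k,k',0)}(G) ≥ k'·n/(Δ + k' − k). -/
theorem stmt_4 {V : Type*} [Fintype V] [DecidableEq V] (G : SimpleGraph V)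
    [DecidableRel G.Adj] (k k' : ℕ) (hk' : 1 ≤ k')
    (hδ : ∀ v : V, k ≤ G.degree v) :
    (k' : ℝ) * Fintype.card V / ((G.maxDegree : ℝ) + k' - k) ≤ G.kkkDomNum k k' 0 :=
  stmt_4_general G k k' hδ
end

section
/- Let k and k' be positive integers, and let G be a finite simple graph of order n with minimum degree δ = δ(G) ≥ max{k, k'} + 2. Then γ_{(k,k',1)}(G) ≤ n − δ + max{k, k' − 1}. -/
/-!
Take a vertex `v` of minimum degree `δ` and `m = max k (k' - 1)`, and let `B` consist of `v`
together with `δ - m - 1 ≥ 1` of its neighbours. The complement of `B` has size `n - δ + m`.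
A vertex outside `B` loses at most `|B| = δ - m` of its at least `δ` neighbours to `B`, and a
vertex of `B` (not adjacent to itself) at most `|B| - 1`; this leaves at least `m ≥ k`,
resp. `m + 1 ≥ k'`, neighbours in the complement. Finally, every vertex of the star `B` has a
neighbour inside `B`.
-/

open Finset

namespace SimpleGraph

variable {V : Type*} [Fintype V] [DecidableEq V] (G : SimpleGraph V) [DecidableRel G.Adj]

theorem kkkDomNum_le_card {k k' k'' : ℕ} {S : Finset V} (hS : G.IsKkkDomSet k k' k'' S) :
    G.kkkDomNum k k' k'' ≤ #S :=
  Nat.sInf_le ⟨S, hS, rfl⟩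

theorem isKkkDomSet_compl_iff {k k' k'' : ℕ} {B : Finset V} :
    G.IsKkkDomSet k k' k'' Bᶜ ↔
      (∀ u ∉ B, k ≤ #(G.neighborFinset u \ B)) ∧
      (∀ u ∈ B, k' ≤ #(G.neighborFinset u \ B) ∧ k'' ≤ #(G.neighborFinset u ∩ B)) := by
  simp only [IsKkkDomSet, mem_compl, not_not, ← sdiff_eq_inter_compl, sdiff_compl, inf_eq_inter]

theorem degree_sub_card_erase_le_card_neighborFinset_sdiff (u : V) (B : Finset V) :
    G.degree u - #(B.erase u) ≤ #(G.neighborFinset u \ B) := by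
  have hinter : G.neighborFinset u ∩ B ⊆ B.erase u := fun w hw ↦
    mem_erase.2 ⟨fun h ↦ G.notMem_neighborFinset_self u (h ▸ (mem_inter.1 hw).1),
      (mem_inter.1 hw).2⟩
  have hsplit := card_sdiff_add_card_inter (G.neighborFinset u) B
  rw [card_neighborFinset_eq_degree] at hsplit
  have hle := card_le_card hinter
  omega

theorem exists_card_eq_forall_exists_adj {v : V} {s : ℕ} (hs : 2 ≤ s)
    (hsv : s ≤ G.degree v + 1) : ∃ B : Finset V, #B = s ∧ ∀ u ∈ B, ∃ w ∈ B, G.Adj u w := by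
  obtain ⟨A, hAv, hAcard⟩ : ∃ A ⊆ G.neighborFinset v, #A = s - 1 :=
    exists_subset_card_eq (by rw [card_neighborFinset_eq_degree]; omega)
  have hvA : v ∉ A := fun h ↦ G.notMem_neighborFinset_self v (hAv h)
  refine ⟨insert v A, by rw [card_insert_of_notMem hvA]; omega, ?_⟩
  rintro u hu
  rcases mem_insert.1 hu with rfl | huA
  · obtain ⟨w, hw⟩ := card_pos.1 (by omega : 0 < #A)
    exact ⟨w, mem_insert_of_mem hw, (G.mem_neighborFinset u w).1 (hAv hw)⟩
  · exact ⟨v, mem_insert_self v A, ((G.mem_neighborFinset v u).1 (hAv huA)).symm⟩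

theorem isKkkDomSet_compl_of_forall_exists_adj {k k' : ℕ} {B : Finset V}
    (hk : #B + k ≤ G.minDegree) (hk' : #B + k' ≤ G.minDegree + 1)
    (hB : ∀ u ∈ B, ∃ w ∈ B, G.Adj u w) : G.IsKkkDomSet k k' 1 Bᶜ := by
  refine (G.isKkkDomSet_compl_iff).2 ⟨fun u hu ↦ ?_, fun u hu ↦ ⟨?_, ?_⟩⟩
  · have hout := G.degree_sub_card_erase_le_card_neighborFinset_sdiff u B
    rw [erase_eq_of_notMem hu] at hout
    have hmin := G.minDegree_le_degree u
    omega
  · have hout := G.degree_sub_card_erase_le_card_neighborFinset_sdiff u B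
    rw [card_erase_of_mem hu] at hout
    have hmin := G.minDegree_le_degree u
    have hBpos := card_pos.2 ⟨u, hu⟩
    omega
  · obtain ⟨w, hwB, huw⟩ := hB u hu
    exact card_pos.2 ⟨w, mem_inter.2 ⟨(G.mem_neighborFinset u w).2 huw, hwB⟩⟩

end SimpleGraph

theorem stmt_10_general {V : Type*} [Fintype V] [DecidableEq V] (G : SimpleGraph V)
    [DecidableRel G.Adj] (k k' : ℕ)
    (hδ : max k k' + 2 ≤ G.minDegree) :
    G.kkkDomNum k k' 1 ≤ Fintype.card V - G.minDegree + max k (k' - 1) := by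
  have : Nonempty V := by
    rcases subsingleton_or_nontrivial V with _ | _
    · rw [G.minDegree_of_subsingleton] at hδ; omega
    · infer_instance
  obtain ⟨v, hv⟩ := G.exists_minimal_degree_vertex
  obtain ⟨B, hBcard, hB⟩ := G.exists_card_eq_forall_exists_adj
    (v := v) (s := G.minDegree - max k (k' - 1)) (by omega) (by omega)
  have hdom := G.isKkkDomSet_compl_of_forall_exists_adj (k := k) (k' := k')
    (by omega) (by omega) hB
  calc G.kkkDomNum k k' 1 ≤ #Bᶜ := G.kkkDomNum_le_card hdom
    _ = Fintype.card V - #B := card_compl B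
    _ ≤ Fintype.card V - G.minDegree + max k (k' - 1) := by omega

/-- If k, k' ≥ 1 and δ(G) ≥ max{k,k'} + 2, then
γ_{(k,k',1)}(G) ≤ n − δ + max{k, k' − 1}. -/
theorem stmt_10 {V : Type*} [Fintype V] [DecidableEq V] (G : SimpleGraph V)
    [DecidableRel G.Adj] (k k' : ℕ) (hk : 1 ≤ k) (hk' : 1 ≤ k')
    (hδ : max k k' + 2 ≤ G.minDegree) :
    G.kkkDomNum k k' 1 ≤ Fintype.card V - G.minDegree + max k (k' - 1) :=
  stmt_10_general G k k' hδ
end
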